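/- Let C be a topologically closed oligomorphic function clone on a countable set X, let n ≥ 1, and let (f_i)_{i∈ℕ} be a sequence of n-ary operations in C. Then there exist a strictly increasing sequence k₀ < k₁ < k₂ < ⋯ of natural numbers, members γ_i of the group of C, and an n-ary operation f ∈ C such that the sequence (γ_i ∘ f_{k_i}) converges pointwise to f; that is, for every t ∈ Xⁿ there is an index i₀ with γ_i(f_{k_i}(t)) = f(t) for all i ≥ i₀. -/

import Mathlib

/-- A relational structure on a set `A`: a family of finitary relations on `A`. -/
structure RelStruct (A : Type) : Type 1 where
  ι : Type
  arity : ι → ℕ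
  rel : ∀ i : ι, Set (Fin (arity i) → A)

/-- An `n`-ary operation `f` preserves the `m`-ary relation `S`. -/
def Preserves {A : Type} {n m : ℕ} (f : (Fin n → A) → A) (S : Set (Fin m → A)) : Prop :=
  ∀ t : Fin n → Fin m → A, (∀ j, t j ∈ S) → (fun k => f (fun j => t j k)) ∈ S

/-- `f` is a polymorphism of `𝔸`: it preserves every relation of `𝔸`. -/
def IsPolymorphism {A : Type} (𝔸 : RelStruct A) {n : ℕ} (f : (Fin n → A) → A) : Prop :=
  ∀ i, Preserves f (𝔸.rel i)

/-- The polymorphism clone of `𝔸`, arity by arity. -/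
def Pol {A : Type} (𝔸 : RelStruct A) : ∀ n : ℕ, Set ((Fin n → A) → A) :=
  fun _ => {f | IsPolymorphism 𝔸 f}

/-- The stabilizer `Pol(𝔸, c₁, …, cₙ)` of the polymorphism clone by the constants
listed in `c`. -/
def PolStab {A : Type} (𝔸 : RelStruct A) (c : List A) : ∀ n : ℕ, Set ((Fin n → A) → A) :=
  fun _ => {f | IsPolymorphism 𝔸 f ∧ ∀ a ∈ c, f (fun _ => a) = a}

/-- `e` is an endomorphism of `𝔸`. -/
def IsEndo {A : Type} (𝔸 : RelStruct A) (e : A → A) : Prop :=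
  ∀ i, ∀ t ∈ 𝔸.rel i, (fun j => e (t j)) ∈ 𝔸.rel i

/-- `α` is an automorphism of `𝔸`: a bijective endomorphism whose inverse is an
endomorphism. -/
def IsAuto {A : Type} (𝔸 : RelStruct A) (α : Equiv.Perm A) : Prop :=
  IsEndo 𝔸 ⇑α ∧ IsEndo 𝔸 ⇑α.symm

/-- `𝔸` is a core: its automorphisms are dense in its endomorphisms. -/
def IsCore {A : Type} (𝔸 : RelStruct A) : Prop :=
  ∀ e : A → A, IsEndo 𝔸 e → ∀ S : Finset A,
    ∃ α : Equiv.Perm A, IsAuto 𝔸 α ∧ ∀ a ∈ S, α a = e a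

/-- The automorphism group of `𝔸` is oligomorphic: for every `k` there are finitely
many orbits on `k`-tuples, i.e. a finite set of tuples meeting every orbit. -/
def AutOligomorphic {A : Type} (𝔸 : RelStruct A) : Prop :=
  ∀ k : ℕ, ∃ S : Finset (Fin k → A), ∀ t : Fin k → A,
    ∃ t' ∈ S, ∃ α : Equiv.Perm A, IsAuto 𝔸 α ∧ ∀ i, α (t' i) = t i

/-- `C` is a function clone: it contains the projections and is closed under composition. -/
structure IsClone {X : Type} (C : ∀ n : ℕ, Set ((Fin n → X) → X)) : Prop where
  proj : ∀ (n : ℕ) (i : Fin n), (fun x : Fin n → X => x i) ∈ C n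
  comp : ∀ {n m : ℕ} (f : (Fin n → X) → X) (g : Fin n → (Fin m → X) → X),
    f ∈ C n → (∀ i, g i ∈ C m) → (fun x => f (fun i => g i x)) ∈ C m

/-- `C` is topologically closed: any operation agreeing with members of `C` on every
finite set belongs to `C`. -/
def CloneClosed {X : Type} (C : ∀ n : ℕ, Set ((Fin n → X) → X)) : Prop :=
  ∀ (n : ℕ) (f : (Fin n → X) → X),
    (∀ F : Finset (Fin n → X), ∃ g ∈ C n, ∀ t ∈ F, g t = f t) → f ∈ C n

/-- The permutation `g` belongs to the group of the clone `C`: both `g` and its inverse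
are (unary) members of `C`. -/
def InGroupOf {X : Type} (C : ∀ n : ℕ, Set ((Fin n → X) → X)) (g : Equiv.Perm X) : Prop :=
  (fun x : Fin 1 → X => g (x 0)) ∈ C 1 ∧ (fun x : Fin 1 → X => g.symm (x 0)) ∈ C 1

/-- The clone `C` is oligomorphic: its group has finitely many orbits on `k`-tuples
for every `k`. -/
def CloneOligomorphic {X : Type} (C : ∀ n : ℕ, Set ((Fin n → X) → X)) : Prop :=
  ∀ k : ℕ, ∃ S : Finset (Fin k → X), ∀ t : Fin k → X,
    ∃ t' ∈ S, ∃ g : Equiv.Perm X, InGroupOf C g ∧ ∀ i, g (t' i) = t i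

/-- `C` contains a pseudo-Siggers operation: a 6-ary `s` and unary `α, β`, all in `C`,
with `α s(x,y,x,z,y,z) ≈ β s(y,x,z,x,z,y)`. -/
def HasPseudoSiggers {X : Type} (C : ∀ n : ℕ, Set ((Fin n → X) → X)) : Prop :=
  ∃ s ∈ C 6, ∃ α ∈ C 1, ∃ β ∈ C 1, ∀ x y z : X,
    α (fun _ => s ![x, y, x, z, y, z]) = β (fun _ => s ![y, x, z, x, z, y])

/-- `f` is a projection. -/
def IsProjection {X : Type} {n : ℕ} (f : (Fin n → X) → X) : Prop :=
  ∃ i : Fin n, f = fun x => x i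

/-- `ξ` is a clone homomorphism from `C` to the clone `P` of projections on the two-element
set: it is arity-preserving, takes values in the projections on members of `C`, sends
projections to the corresponding projections, and preserves composition. -/
structure CloneHomToProj {X : Type} (C : ∀ n : ℕ, Set ((Fin n → X) → X))
    (ξ : ∀ n : ℕ, ((Fin n → X) → X) → ((Fin n → Bool) → Bool)) : Prop where
  maps_to_proj : ∀ (n : ℕ), ∀ f ∈ C n, IsProjection (ξ n f)
  map_proj : ∀ (n : ℕ) (i : Fin n), ξ n (fun x => x i) = fun x => x i
  map_comp : ∀ {n m : ℕ} (f : (Fin n → X) → X) (g : Fin n → (Fin m → X) → X),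
    f ∈ C n → (∀ i, g i ∈ C m) →
    ξ m (fun x => f (fun i => g i x)) = fun x => ξ n f (fun i => ξ m (g i) x)

/-- `ξ` is continuous on `C` (w.r.t. the topology of pointwise convergence):
its value at `f ∈ C` is determined by the restriction of `f` to some finite set. -/
def CloneHomCont {X : Type} (C : ∀ n : ℕ, Set ((Fin n → X) → X))
    (ξ : ∀ n : ℕ, ((Fin n → X) → X) → ((Fin n → Bool) → Bool)) : Prop :=
  ∀ (n : ℕ), ∀ f ∈ C n, ∃ F : Finset (Fin n → X),
    ∀ g ∈ C n, (∀ t ∈ F, g t = f t) → ξ n g = ξ n f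

/-- Primitive positive formulas with `k` free variables, over a relational signature with
relation symbols `ι` of arities `ar`, and with parameters from `P`: atoms are equalities
and relations applied to variables or parameters, combined by conjunction and existential
quantification. -/
inductive PP (ι : Type) (ar : ι → ℕ) (P : Type) : ℕ → Type where
  | eq : ∀ {k : ℕ}, (Fin k ⊕ P) → (Fin k ⊕ P) → PP ι ar P k
  | rel : ∀ {k : ℕ} (i : ι), (Fin (ar i) → (Fin k ⊕ P)) → PP ι ar P k
  | and : ∀ {k : ℕ}, PP ι ar P k → PP ι ar P k → PP ι ar P k
  | ex : ∀ {k : ℕ}, PP ι ar P (k + 1) → PP ι ar P k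

/-- Satisfaction of a pp-formula under the valuation `v` of the free variables, where the
relation symbols are interpreted by `rels` and the parameters by `par`. -/
def PP.Sat {A ι P : Type} {ar : ι → ℕ} (rels : ∀ i, Set (Fin (ar i) → A)) (par : P → A) :
    {k : ℕ} → PP ι ar P k → (Fin k → A) → Prop
  | _, .eq x y, v => Sum.elim v par x = Sum.elim v par y
  | _, .rel i t, v => (fun j => Sum.elim v par (t j)) ∈ rels i
  | _, .and φ ψ, v => PP.Sat rels par φ v ∧ PP.Sat rels par ψ v
  | _, .ex φ, v => ∃ a : A, PP.Sat rels par φ (Fin.snoc v a)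

/-- The `m`-ary relation `S` is definable in `𝔸` by a pp-formula whose parameters are
interpreted via `par`. -/
def PPDefinable {A : Type} (𝔸 : RelStruct A) {P : Type} (par : P → A) {m : ℕ}
    (S : Set (Fin m → A)) : Prop :=
  ∃ φ : PP 𝔸.ι 𝔸.arity P m, S = {v | PP.Sat 𝔸.rel par φ v}

/-- `S` is pp-definable in `𝔸` with parameters (arbitrary elements of the domain). -/
def PPDefWithParams {A : Type} (𝔸 : RelStruct A) {m : ℕ} (S : Set (Fin m → A)) : Prop :=
  PPDefinable 𝔸 (id : A → A) S

/-- `S` is pp-definable in `𝔸` without parameters. -/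
def PPDefNoParams {A : Type} (𝔸 : RelStruct A) {m : ℕ} (S : Set (Fin m → A)) : Prop :=
  PPDefinable 𝔸 (fun e : Empty => e.elim) S

/-- Reading a `(k·n)`-tuple as a `k`-tuple of `n`-tuples. -/
def unflatten {A : Type} {k n : ℕ} (w : Fin (k * n) → A) : Fin k → Fin n → A :=
  fun j i => w (finProdFinEquiv (j, i))

/-- `𝔸` pp-interprets `𝔹` with parameters: there are `n ≥ 1` and a surjective partial map
`h` from `Aⁿ` onto `B` (with domain `dom`) such that `dom`, the `h`-preimage of equality,
and the `h`-preimage of every relation of `𝔹` are pp-definable with parameters in `𝔸`. -/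
def PPInterpretsWithParams {A B : Type} (𝔸 : RelStruct A) (𝔹 : RelStruct B) : Prop :=
  ∃ n : ℕ, 1 ≤ n ∧ ∃ (dom : Set (Fin n → A)) (h : (Fin n → A) → B),
    (∀ b : B, ∃ t ∈ dom, h t = b) ∧
    PPDefWithParams 𝔸 dom ∧
    PPDefWithParams 𝔸 {w : Fin (2 * n) → A |
      unflatten w 0 ∈ dom ∧ unflatten w 1 ∈ dom ∧ h (unflatten w 0) = h (unflatten w 1)} ∧
    ∀ i : 𝔹.ι, PPDefWithParams 𝔸 {w : Fin (𝔹.arity i * n) → A |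
      (∀ j, unflatten w j ∈ dom) ∧ (fun j => h (unflatten w j)) ∈ 𝔹.rel i}

/-- The structure `K₃ = ({1,2,3}; ≠)`. -/
def K3 : RelStruct (Fin 3) where
  ι := Unit
  arity := fun _ => 2
  rel := fun _ => {v | v 0 ≠ v 1}

/-- The permutation group `G` is oligomorphic. -/
def GroupOligomorphic {X : Type} (G : Subgroup (Equiv.Perm X)) : Prop :=
  ∀ k : ℕ, ∃ S : Finset (Fin k → X), ∀ t : Fin k → X,
    ∃ t' ∈ S, ∃ α ∈ G, ∀ i, α (t' i) = t i

/-- The orbit of `x` under `G`. -/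
def orbitOf {X : Type} (G : Subgroup (Equiv.Perm X)) (x : X) : Set X :=
  {y | ∃ α ∈ G, α x = y}

/-- The binary relation `R` is invariant under `G`. -/
def GGInvariant {X : Type} (R : X → X → Prop) (G : Subgroup (Equiv.Perm X)) : Prop :=
  ∀ α ∈ G, ∀ x y, R x y → R (α x) (α y)

/-- The relational structure associated with a gg-system `(R, G)`: its relations are `R`
together with all orbits of the componentwise action of `G` on finite tuples. -/
def ggStruct {X : Type} (R : X → X → Prop) (G : Subgroup (Equiv.Perm X)) : RelStruct X where
  ι := Unit ⊕ (Σ k : ℕ, Fin k → X)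
  arity := Sum.elim (fun _ => 2) (fun p => p.1)
  rel := fun i => match i with
    | Sum.inl _ => {v : Fin 2 → X | R (v 0) (v 1)}
    | Sum.inr p => {v : Fin p.1 → X | ∃ α ∈ G, ∀ j, α (p.2 j) = v j}

/-- `a, b, c` induce a `K₃` in `R`: pairwise distinct and pairwise related. -/
def Triangle {X : Type} (R : X → X → Prop) (a b c : X) : Prop :=
  a ≠ b ∧ a ≠ c ∧ b ≠ c ∧ R a b ∧ R a c ∧ R b c

/-- The graph `(X; R)` contains a `K₃`. -/
def ContainsK3 {X : Type} (R : X → X → Prop) : Prop :=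
  ∃ a b c, Triangle R a b c

/-- The gg-system `(R, G)` has a pseudoloop: an edge `(a, α(a))` with `α ∈ G`. -/
def HasPseudoloop {X : Type} (R : X → X → Prop) (G : Subgroup (Equiv.Perm X)) : Prop :=
  ∃ a, ∃ α ∈ G, R a (α a)

/-- The support of `R`: elements contained in an edge. -/
def Support {X : Type} (R : X → X → Prop) : Set X :=
  {x | ∃ y, R x y}

/-- The number of `G`-orbits contained in the support of `R`. -/
noncomputable def supportOrbitCount {X : Type} (R : X → X → Prop)
    (G : Subgroup (Equiv.Perm X)) : ℕ :=
  Nat.card ↥(orbitOf G '' Support R)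

/-- Minimality of a pseudoloop-free gg-system `(R, G)` containing a `K₃`: it does not
pp-define a symmetric relation `R'` giving a pseudoloop-free gg-system containing a `K₃`
whose support consists of strictly fewer orbits. -/
def ggMinimal {X : Type} (R : X → X → Prop) (G : Subgroup (Equiv.Perm X)) : Prop :=
  ¬ ∃ R' : X → X → Prop,
      PPDefNoParams (ggStruct R G) {v : Fin 2 → X | R' (v 0) (v 1)} ∧
      (∀ x y, R' x y → R' y x) ∧ GGInvariant R' G ∧
      ContainsK3 R' ∧ ¬ HasPseudoloop R' G ∧
      supportOrbitCount R' G < supportOrbitCount R G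

/-- `x` and `y` are `n`-diamond-connected with respect to `R`. -/
def DiamondConn {X : Type} (R : X → X → Prop) (n : ℕ) (x y : X) : Prop :=
  ∃ a b c d : ℕ → X,
    (∀ i < n, Triangle R (a i) (b i) (c i) ∧ Triangle R (b i) (c i) (d i)) ∧
    a 0 = x ∧ (∀ i, i + 1 < n → d i = a (i + 1)) ∧ d (n - 1) = y

/-!
Enumerate `Xⁿ` as `t₀, t₁, …`. By oligomorphicity the tuples `(f_i(t₀), …, f_i(t_m))` fall
into finitely many orbits of the group of `C`, so infinitely many `i` share one orbit; nesting
these infinite sets over `m` and extracting a diagonal subsequence `k` gives group elements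
`ε_m` with `ε_m ∘ f_{k_{m+1}} = f_{k_m}` on `t₀, …, t_m`. The products `γ_m = ε₀ ⋯ ε_{m-1}`
then make `γ_m ∘ f_{k_m}` eventually constant at every `t_j`, and the limit lies in `C`
because `C` is topologically closed.
-/

theorem exists_strictMono_diagonal {P : ℕ → ℕ → ℕ → Prop}
    (h : ∀ m (A : Set ℕ), A.Infinite → ∃ B ⊆ A, B.Infinite ∧ ∀ i ∈ B, ∀ i' ∈ B, P m i i') :
    ∃ k : ℕ → ℕ, StrictMono k ∧ ∀ m, P m (k (m + 1)) (k m) := by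
  choose B hBA hBinf hBP using h
  let A : ℕ → {A : Set ℕ // A.Infinite} := fun m =>
    Nat.rec ⟨Set.univ, Set.infinite_univ⟩ (fun m A => ⟨B m A.1 A.2, hBinf _ _ _⟩) m
  have hA_anti : Antitone fun m => (A m).1 :=
    antitone_nat_of_succ_le fun m => hBA m _ (A m).2
  obtain ⟨k, hk, hkA⟩ := Filter.extraction_forall_of_frequently fun m =>
    Nat.frequently_atTop_iff_infinite.mpr (A (m + 1)).2
  exact ⟨k, hk, fun m => hBP m _ _ _ (hA_anti m.succ.le_succ (hkA (m + 1))) _ (hkA m)⟩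

theorem List.prod_range_map_apply_eq_of_le {X : Type} {u : ℕ → ℕ → X} {ε : ℕ → Equiv.Perm X}
    (hε : ∀ m j, j ≤ m → ε m (u (m + 1) j) = u m j) {j m : ℕ} (hjm : j ≤ m) :
    ((List.range m).map ε).prod (u m j) = ((List.range j).map ε).prod (u j j) := by
  induction m, hjm using Nat.le_induction with
  | base => rfl
  | succ m hjm ih => rw [List.prod_range_succ, Equiv.Perm.mul_apply, hε m j hjm, ih]

section Clone

variable {X : Type} {C : ∀ n : ℕ, Set ((Fin n → X) → X)}

theorem IsClone.perm_comp_mem (hC : IsClone C) {g : Equiv.Perm X} (hg : InGroupOf C g) {n : ℕ}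
    {f : (Fin n → X) → X} (hf : f ∈ C n) : (fun x => g (f x)) ∈ C n :=
  hC.comp (fun x : Fin 1 → X => g (x 0)) (fun _ => f) hg.1 fun _ => hf

def IsClone.group (hC : IsClone C) : Subgroup (Equiv.Perm X) where
  carrier := {g | InGroupOf C g}
  one_mem' := ⟨hC.proj 1 0, hC.proj 1 0⟩
  mul_mem' {g h} hg hh :=
    ⟨hC.comp (fun x : Fin 1 → X => g (x 0)) (fun _ x => h (x 0)) hg.1 fun _ => hh.1,
      hC.comp (fun x : Fin 1 → X => h.symm (x 0)) (fun _ x => g.symm (x 0)) hh.2 fun _ => hg.2⟩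
  inv_mem' hg := ⟨hg.2, hg.1⟩

/-- Infinite pigeonhole over the finitely many orbits of `m`-tuples. -/
theorem CloneOligomorphic.exists_infinite_subset_sameOrbit (hO : CloneOligomorphic C)
    (hC : IsClone C) {m : ℕ} (u : ℕ → Fin m → X) {A : Set ℕ} (hA : A.Infinite) :
    ∃ B ⊆ A, B.Infinite ∧ ∀ i ∈ B, ∀ i' ∈ B, ∃ g ∈ hC.group, ∀ j, g (u i j) = u i' j := by
  obtain ⟨S, hS⟩ := hO m
  choose rep hrepS γ hγ hγrep using fun i => hS (u i)
  obtain ⟨s, -, hs⟩ : ∃ s ∈ S, (A ∩ rep ⁻¹' {s}).Infinite := by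
    by_contra! hfin
    exact hA ((S.finite_toSet.biUnion hfin).subset fun i hi =>
      Set.mem_biUnion (hrepS i) ⟨hi, rfl⟩)
  refine ⟨A ∩ rep ⁻¹' {s}, Set.inter_subset_left, hs, ?_⟩
  rintro i ⟨-, hi⟩ i' ⟨-, hi'⟩
  refine ⟨γ i' * (γ i)⁻¹, mul_mem (hγ i') (inv_mem (hγ i)), fun j => ?_⟩
  rw [Equiv.Perm.mul_apply, Equiv.Perm.inv_eq_iff_eq.mpr (hγrep i j).symm, ← hγrep i' j,
    Set.eq_of_mem_singleton hi, Set.eq_of_mem_singleton hi']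

theorem CloneClosed.mem_of_eventually_eq (hCl : CloneClosed C) {n : ℕ}
    {g : ℕ → (Fin n → X) → X} (hg : ∀ i, g i ∈ C n) {f : (Fin n → X) → X}
    (hgf : ∀ t, ∀ᶠ i in Filter.atTop, g i t = f t) : f ∈ C n := by
  refine hCl n f fun F => ?_
  obtain ⟨i, hi⟩ := ((Filter.eventually_all_finset F).mpr fun t _ => hgf t).exists
  exact ⟨g i, hg i, hi⟩

end Clone

theorem statement9_general {X : Type} [Countable X] (C : ∀ n : ℕ, Set ((Fin n → X) → X))
    (hClone : IsClone C) (hClosed : CloneClosed C) (hOlig : CloneOligomorphic C)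
    (n : ℕ) (f : ℕ → (Fin n → X) → X) (hf : ∀ i, f i ∈ C n) :
    ∃ k : ℕ → ℕ, StrictMono k ∧
      ∃ γ : ℕ → Equiv.Perm X, (∀ i, InGroupOf C (γ i)) ∧
        ∃ g ∈ C n, ∀ t : Fin n → X, ∃ i₀ : ℕ, ∀ i ≥ i₀, γ i (f (k i) t) = g t := by
  rcases isEmpty_or_nonempty (Fin n → X) with hE | hE
  · exact ⟨id, strictMono_id, 1, fun _ => hClone.group.one_mem, f 0, hf 0, isEmptyElim⟩
  obtain ⟨e, he⟩ := exists_surjective_nat (Fin n → X)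
  choose idx hidx using he
  obtain ⟨k, hk, hε⟩ := exists_strictMono_diagonal fun m _ hA =>
    hOlig.exists_infinite_subset_sameOrbit hClone (fun i (j : Fin (m + 1)) => f i (e j)) hA
  choose ε hεG hε using hε
  let γ m := ((List.range m).map ε).prod
  have hγG m : γ m ∈ hClone.group :=
    Subgroup.list_prod_mem _ (List.forall_mem_map.mpr fun m' _ => hεG m')
  have hstab j i (hji : j ≤ i) : γ i (f (k i) (e j)) = γ j (f (k j) (e j)) :=
    List.prod_range_map_apply_eq_of_le (u := fun m j => f (k m) (e j))
      (fun m j hj => hε m ⟨j, Nat.lt_succ_of_le hj⟩) hji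
  have hlim t i (hi : idx t ≤ i) : γ i (f (k i) t) = γ (idx t) (f (k (idx t)) t) := by
    simpa only [hidx t] using hstab (idx t) i hi
  refine ⟨k, hk, γ, hγG, _, hClosed.mem_of_eventually_eq
    (fun i => hClone.perm_comp_mem (hγG i) (hf (k i)))
    (fun t => Filter.eventually_atTop.mpr ⟨idx t, hlim t⟩), fun t => ⟨idx t, hlim t⟩⟩

/-- In a topologically closed oligomorphic function clone on a countable
set, every sequence of `n`-ary operations admits a subsequence which, after composing with
suitable members of the group of the clone, converges pointwise to a member of the clone. -/
theorem statement9 {X : Type} [Countable X] (C : ∀ n : ℕ, Set ((Fin n → X) → X))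
    (hClone : IsClone C) (hClosed : CloneClosed C) (hOlig : CloneOligomorphic C)
    (n : ℕ) (hn : 1 ≤ n) (f : ℕ → (Fin n → X) → X) (hf : ∀ i, f i ∈ C n) :
    ∃ k : ℕ → ℕ, StrictMono k ∧
      ∃ γ : ℕ → Equiv.Perm X, (∀ i, InGroupOf C (γ i)) ∧
        ∃ g ∈ C n, ∀ t : Fin n → X, ∃ i₀ : ℕ, ∀ i ≥ i₀, γ i (f (k i) t) = g t :=
  statement9_general C hClone hClosed hOlig n f hf
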